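/- arXiv:2310.01970 — 4 statements merged into one kernel-verified Lean document; each statement's English description precedes it below -/
import Mathlib

section
/- For every τ ∈ (0,1) and all real numbers u and v, Knight's identity holds: ρ_τ(u − v) − ρ_τ(u) = −v·ψ_τ(u) + ∫₀^v [1{u ≤ s} − 1{u ≤ 0}] ds, where the integral is the oriented Lebesgue integral (equal to −∫_v^0 when v < 0). -/
/-!
The ramp `s ↦ max (s - u) 0` is an antiderivative of `s ↦ 1{u ≤ s}`, so the integral equals
`max (v - u) 0 - max (-u) 0 - v·1{u ≤ 0}`, and the identity reduces to a case check on the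
signs of `u` and `u - v`.
-/

open MeasureTheory Set

/-- Taken from the right, the derivative matches the indicator even at the kink `x = u`. -/
theorem hasDerivWithinAt_max_sub_zero_Ioi (u x : ℝ) :
    HasDerivWithinAt (fun s => max (s - u) 0) (if u ≤ x then 1 else 0) (Ioi x) x := by
  split_ifs with hux
  · refine ((hasDerivAt_id x).sub_const u).hasDerivWithinAt.congr (fun s hs => ?_) ?_
    · exact max_eq_left (sub_nonneg.2 (hux.trans (le_of_lt hs)))
    · exact max_eq_left (sub_nonneg.2 hux)
  · replace hux := not_le.1 hux
    have hconst : HasDerivWithinAt (fun s => max (s - u) 0) 0 (Iio u) x :=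
      (hasDerivWithinAt_const x _ (0 : ℝ)).congr
        (fun s hs => max_eq_right (sub_nonpos.2 (le_of_lt hs))) (max_eq_right (sub_nonpos.2 hux.le))
    exact hconst.mono_of_mem_nhdsWithin (mem_nhdsWithin_of_mem_nhds (Iio_mem_nhds hux))

theorem intervalIntegrable_ite_le (u a b : ℝ) :
    IntervalIntegrable (fun s => if u ≤ s then (1 : ℝ) else 0) volume a b :=
  Monotone.intervalIntegrable fun s t hst => by
    split_ifs with hs ht ht <;> first | exact absurd (hs.trans hst) ht | norm_num

theorem integral_ite_le (u a b : ℝ) :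
    ∫ s in a..b, (if u ≤ s then (1 : ℝ) else 0) = max (b - u) 0 - max (a - u) 0 :=
  intervalIntegral.integral_eq_sub_of_hasDeriv_right
    ((continuous_sub_right u).max continuous_const).continuousOn
    (fun x _ => hasDerivWithinAt_max_sub_zero_Ioi u x) (intervalIntegrable_ite_le u a b)

theorem knight_identity_general (τ : ℝ) (u v : ℝ) :
    (τ - if u - v ≤ 0 then 1 else 0) * (u - v) - (τ - if u ≤ 0 then 1 else 0) * u
      = -v * (τ - if u ≤ 0 then 1 else 0)
        + ∫ s in (0 : ℝ)..v, ((if u ≤ s then (1 : ℝ) else 0) - (if u ≤ 0 then 1 else 0)) := by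
  rw [intervalIntegral.integral_sub (intervalIntegrable_ite_le u 0 v) intervalIntegrable_const,
    integral_ite_le, intervalIntegral.integral_const, smul_eq_mul, sub_zero]
  rcases max_cases (v - u) 0 with ⟨h₁, _⟩ | ⟨h₁, _⟩ <;>
    rcases max_cases (0 - u) 0 with ⟨h₂, _⟩ | ⟨h₂, _⟩ <;>
    rw [h₁, h₂] <;> split_ifs <;> linarith

/-- Knight's identity: for the check function `ρ_τ(u) = (τ - 1{u ≤ 0})·u` and
`ψ_τ(u) = τ - 1{u ≤ 0}`, we have
`ρ_τ(u − v) − ρ_τ(u) = −v·ψ_τ(u) + ∫₀^v [1{u ≤ s} − 1{u ≤ 0}] ds`. -/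
theorem knight_identity (τ : ℝ) (hτ : τ ∈ Set.Ioo (0 : ℝ) 1) (u v : ℝ) :
    (τ - if u - v ≤ 0 then 1 else 0) * (u - v) - (τ - if u ≤ 0 then 1 else 0) * u
      = -v * (τ - if u ≤ 0 then 1 else 0)
        + ∫ s in (0 : ℝ)..v, ((if u ≤ s then (1 : ℝ) else 0) - (if u ≤ 0 then 1 else 0)) :=
  knight_identity_general τ u v
end

section
/- Let ε be a real-valued random variable on a probability space with cumulative distribution function F(s) = P(ε ≤ s). Then for every τ ∈ (0,1) and every v ∈ ℝ, the difference ρ_τ(ε − v) − ρ_τ(ε) is integrable and E[ρ_τ(ε − v) − ρ_τ(ε)] = −v·(τ − F(0)) + ∫₀^v (F(s) − F(0)) ds, where the integral is the oriented Lebesgue integral. -/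
/-!
Knight's identity: for every real `u`,
`ρ_τ(u - v) - ρ_τ(u) = -τ v + ∫₀^v 1{u ≤ s} ds`,
both sides being piecewise linear in `u` with the same kinks. Putting `u = ε` and taking
expectations, the indicator is bounded and jointly measurable on `Ω × [0, v]`, so Fubini
exchanges the two integrals and turns `E 1{ε ≤ s}` into `F(s)`.
-/

open MeasureTheory Set

noncomputable def checkLoss (τ u : ℝ) : ℝ := (τ - if u ≤ 0 then 1 else 0) * u

theorem intervalIntegral_indicator_Ici_one (u a b : ℝ) :
    ∫ s in a..b, (Ici u).indicator (1 : ℝ → ℝ) s = max (b - u) 0 - max (a - u) 0 := by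
  wlog hab : a ≤ b generalizing a b
  · rw [intervalIntegral.integral_symm, this b a (le_of_not_ge hab)]
    ring
  rw [intervalIntegral.integral_of_le hab, integral_indicator_one measurableSet_Ici,
    measureReal_restrict_apply measurableSet_Ici, inter_comm,
    ← measureReal_congr ((ae_eq_refl (Ioc a b)).inter (Ioi_ae_eq_Ici (μ := volume) (a := u))),
    Ioc_inter_Ioi, Real.volume_real_Ioc]
  rcases le_total u a with hu | hu
  · rw [max_eq_left hu, max_eq_left (sub_nonneg.2 hab), max_eq_left (by linarith),
      max_eq_left (sub_nonneg.2 hu)]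
    ring
  · rw [max_eq_right hu, max_eq_right (sub_nonpos.2 hu), sub_zero]

theorem checkLoss_sub_checkLoss (τ u v : ℝ) :
    checkLoss τ (u - v) - checkLoss τ u
      = -(τ * v) + ∫ s in 0..v, (Ici u).indicator (1 : ℝ → ℝ) s := by
  rw [intervalIntegral_indicator_Ici_one, checkLoss, checkLoss]
  simp only [max_def]
  split_ifs <;> linarith

section Fubini

variable {Ω : Type*} [MeasurableSpace Ω] {μ : Measure Ω} [IsFiniteMeasure μ] {ε : Ω → ℝ}

theorem integrable_uncurry_indicator_Ici (hε : Measurable ε) (a b : ℝ) :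
    Integrable (Function.uncurry fun s ω => (Ici (ε ω)).indicator (1 : ℝ → ℝ) s)
      ((volume.restrict (uIoc a b)).prod μ) := by
  have : IsFiniteMeasure (volume.restrict (uIoc a b)) := Real.isFiniteMeasure_restrict_Ioc _ _
  exact (integrable_const 1).indicator (measurableSet_le (hε.comp measurable_snd) measurable_fst)

theorem integrable_intervalIntegral_indicator_Ici (hε : Measurable ε) (a b : ℝ) :
    Integrable (fun ω => ∫ s in a..b, (Ici (ε ω)).indicator (1 : ℝ → ℝ) s) μ := by
  simp_rw [intervalIntegral.intervalIntegral_eq_integral_uIoc]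
  exact ((integrable_uncurry_indicator_Ici hε a b).swap.integral_prod_left).const_mul _

theorem integral_intervalIntegral_indicator_Ici (hε : Measurable ε) (a b : ℝ) :
    ∫ ω, (∫ s in a..b, (Ici (ε ω)).indicator (1 : ℝ → ℝ) s) ∂μ
      = ∫ s in a..b, μ.real {ω | ε ω ≤ s} := by
  rw [← intervalIntegral_integral_swap (integrable_uncurry_indicator_Ici hε a b)]
  congr with s
  exact integral_indicator_one (measurableSet_le hε measurable_const)

end Fubini

theorem expected_check_loss_difference_general
    {Ω : Type*} [MeasurableSpace Ω] (μ : Measure Ω) [IsProbabilityMeasure μ]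
    (ε : Ω → ℝ) (hε : Measurable ε) (τ : ℝ) (v : ℝ) :
    Integrable (fun ω => (τ - if ε ω - v ≤ 0 then 1 else 0) * (ε ω - v)
        - (τ - if ε ω ≤ 0 then 1 else 0) * ε ω) μ
    ∧ (∫ ω, ((τ - if ε ω - v ≤ 0 then 1 else 0) * (ε ω - v)
          - (τ - if ε ω ≤ 0 then 1 else 0) * ε ω) ∂μ
        = -v * (τ - (μ {ω | ε ω ≤ 0}).toReal)
          + ∫ s in (0 : ℝ)..v, ((μ {ω | ε ω ≤ s}).toReal - (μ {ω | ε ω ≤ 0}).toReal)) := by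
  have knight (u : ℝ) :
      (τ - if u - v ≤ 0 then 1 else 0) * (u - v) - (τ - if u ≤ 0 then 1 else 0) * u
        = -(τ * v) + ∫ s in 0..v, (Ici u).indicator (1 : ℝ → ℝ) s :=
    checkLoss_sub_checkLoss τ u v
  have hint := integrable_intervalIntegral_indicator_Ici (μ := μ) hε 0 v
  have hF : Monotone fun s => μ.real {ω | ε ω ≤ s} :=
    fun s t hst => measureReal_mono fun ω h => h.trans hst
  simp only [knight, ← measureReal_def]
  refine ⟨(integrable_const _).add hint, ?_⟩
  rw [integral_add (integrable_const _) hint, integral_const,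
    integral_intervalIntegral_indicator_Ici hε,
    intervalIntegral.integral_sub hF.intervalIntegrable intervalIntegrable_const,
    intervalIntegral.integral_const]
  simp only [probReal_univ, smul_eq_mul, one_mul, sub_zero]
  ring

/-- For a real random variable `ε` with cdf `F(s) = P(ε ≤ s)`, for every `τ ∈ (0,1)` and
`v ∈ ℝ`, the difference `ρ_τ(ε − v) − ρ_τ(ε)` is integrable and
`E[ρ_τ(ε − v) − ρ_τ(ε)] = −v·(τ − F(0)) + ∫₀^v (F(s) − F(0)) ds`. -/
theorem expected_check_loss_difference
    {Ω : Type*} [MeasurableSpace Ω] (μ : Measure Ω) [IsProbabilityMeasure μ]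
    (ε : Ω → ℝ) (hε : Measurable ε) (τ : ℝ) (hτ : τ ∈ Set.Ioo (0 : ℝ) 1) (v : ℝ) :
    Integrable (fun ω => (τ - if ε ω - v ≤ 0 then 1 else 0) * (ε ω - v)
        - (τ - if ε ω ≤ 0 then 1 else 0) * ε ω) μ
    ∧ (∫ ω, ((τ - if ε ω - v ≤ 0 then 1 else 0) * (ε ω - v)
          - (τ - if ε ω ≤ 0 then 1 else 0) * ε ω) ∂μ
        = -v * (τ - (μ {ω | ε ω ≤ 0}).toReal)
          + ∫ s in (0 : ℝ)..v, ((μ {ω | ε ω ≤ s}).toReal - (μ {ω | ε ω ≤ 0}).toReal)) :=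
  expected_check_loss_difference_general μ ε hε τ v
end

section
/- Let x₁, …, x_n be points in a set α, let J ≥ 1 be an integer, ρ₁ > 0, and let h : Δ_J → (α → ℝ) satisfy the empirical Lipschitz condition ‖h(w) − h(w′)‖_{P_n} ≤ ρ₁·‖w − w′‖₁ for all w, w′ ∈ Δ_J. Then for every u with 0 < u ≤ ρ₁, the u-covering number of the class H = {h(w) : w ∈ Δ_J} with respect to ‖·‖_{P_n} is at most (1 + 4ρ₁/u)^{J−1}. -/
/-!
Projecting the simplex `Δ_{d+1}` onto its first `d` coordinates lands in the unit `ℓ¹` ball of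
`ℝ^d` and at most halves `ℓ¹` distances, since the last coordinate is determined by the others.
A volume comparison bounds the size of any `ε`-separated subset of `Δ_{d+1}` by `(1 + 4/ε)^d`,
so a maximal one is an `ε`-net of that size. With `ε = u/ρ₁`, the Lipschitz condition carries
this net over to a `u`-net of the class.
-/

open Metric MeasureTheory Module Finset
open scoped NNReal ENNReal

lemma Metric.isSeparated_iff_pairwise_lt_dist {X : Type*} [PseudoMetricSpace X] {ε : ℝ≥0}
    {s : Set X} : IsSeparated ε s ↔ s.Pairwise (fun x y => ε < dist x y) := by
  simp only [IsSeparated, edist_nndist, ENNReal.coe_lt_coe, ← NNReal.coe_lt_coe, coe_nndist]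

theorem Metric.IsSeparated.card_le_of_subset_closedBall {E : Type*} [NormedAddCommGroup E]
    [NormedSpace ℝ E] [FiniteDimensional ℝ E] {S : Finset E} {ε : ℝ≥0} {c : E} {R : ℝ}
    (hε : 0 < ε) (hR : 0 ≤ R) (hS : IsSeparated ε (S : Set E))
    (hSR : (S : Set E) ⊆ closedBall c R) :
    (S.card : ℝ) ≤ (1 + 2 * R / ε) ^ finrank ℝ E := by
  borelize E
  set μ : Measure E := Measure.addHaar
  set r : ℝ := ε / 2 with hr_def
  have hr : 0 < r := by positivity
  have hdisj : (S : Set E).PairwiseDisjoint (closedBall · r) := fun p hp q hq hpq =>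
    closedBall_disjoint_closedBall <| by
      rw [hr_def, add_halves]; exact isSeparated_iff_pairwise_lt_dist.1 hS hp hq hpq
  have hsub : ∀ p ∈ S, closedBall p r ⊆ closedBall c (R + r) := fun p hp =>
    closedBall_subset_closedBall' (by linarith [mem_closedBall.1 (hSR hp)])
  have hvol : ∑ p ∈ S, μ.real (closedBall p r) ≤ μ.real (closedBall c (R + r)) := by
    rw [← measureReal_biUnion_finset hdisj (fun _ _ => measurableSet_closedBall)
      (fun _ _ => measure_closedBall_lt_top.ne)]
    exact measureReal_mono (Set.iUnion₂_subset hsub) measure_closedBall_lt_top.ne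
  simp only [Measure.addHaar_real_closedBall μ _ hr.le, sum_const, nsmul_eq_mul,
    Measure.addHaar_real_closedBall μ _ (by positivity : 0 ≤ R + r)] at hvol
  have hunit : 0 < μ.real (ball 0 1) :=
    ENNReal.toReal_pos (measure_ball_pos μ 0 one_pos).ne' measure_ball_lt_top.ne
  have hscale : R + r = (1 + 2 * R / ε) * r := by
    rw [hr_def]; field_simp; ring
  rw [hscale, mul_pow, mul_assoc] at hvol
  exact le_of_mul_le_mul_right hvol (by positivity)

theorem Metric.exists_finset_isCover_of_forall_card_le {X : Type*} [PseudoEMetricSpace X]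
    {A : Set X} {ε : ℝ≥0} {B : ℝ}
    (hB : ∀ S : Finset X, ↑S ⊆ A → IsSeparated ε (S : Set X) → (S.card : ℝ) ≤ B) :
    ∃ C : Finset X, ↑C ⊆ A ∧ (C.card : ℝ) ≤ B ∧ IsCover ε A C := by
  have hpack : packingNumber ε A ≠ ⊤ := by
    refine ne_top_of_le_ne_top (ENat.natCast_ne_top ⌊B⌋₊) <|
      iSup₂_le fun C hCA => iSup_le fun hC => ?_
    by_contra! hbig
    obtain ⟨t, htC, htcard⟩ := Set.exists_subset_encard_eq (Order.add_one_le_of_lt hbig)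
    have htfin : t.Finite := Set.finite_of_encard_eq_coe htcard
    have := hB htfin.toFinset (by simpa using htC.trans hCA) (by simpa using hC.subset htC)
    rw [htfin.encard_eq_coe_toFinset_card] at htcard
    norm_cast at htcard
    rw [htcard, Nat.cast_add_one] at this
    exact (Nat.lt_floor_add_one B).not_ge this
  have hfin : (maximalSeparatedSet ε A).Finite :=
    Set.encard_ne_top_iff.1 (encard_maximalSeparatedSet hpack ▸ hpack)
  refine ⟨hfin.toFinset, ?_, hB _ ?_ ?_, ?_⟩ <;> rw [hfin.coe_toFinset]
  exacts [maximalSeparatedSet_subset, maximalSeparatedSet_subset, isSeparated_maximalSeparatedSet,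
    isCover_maximalSeparatedSet hpack]

lemma sum_abs_le_two_mul_sum_abs_castSucc_of_sum_eq_zero {d : ℕ} {v : Fin (d + 1) → ℝ}
    (hv : ∑ j, v j = 0) : ∑ j, |v j| ≤ 2 * ∑ j : Fin d, |v j.castSucc| := by
  rw [Fin.sum_univ_castSucc] at hv ⊢
  have hlast : |v (Fin.last d)| ≤ ∑ j : Fin d, |v j.castSucc| := by
    rw [show v (Fin.last d) = -∑ j : Fin d, v j.castSucc by linarith, abs_neg]
    exact abs_sum_le_sum_abs _ _
  linarith

theorem card_le_of_isSeparated_stdSimplex {d : ℕ} {ε : ℝ≥0} (hε : 0 < ε)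
    {S : Finset (PiLp 1 (fun _ : Fin (d + 1) => ℝ))}
    (hSΔ : ∀ p ∈ S, WithLp.ofLp p ∈ stdSimplex ℝ (Fin (d + 1)))
    (hS : IsSeparated ε (S : Set (PiLp 1 (fun _ : Fin (d + 1) => ℝ)))) :
    (S.card : ℝ) ≤ (1 + 4 / ε) ^ d := by
  let π : PiLp 1 (fun _ : Fin (d + 1) => ℝ) → PiLp 1 (fun _ : Fin d => ℝ) :=
    fun p => WithLp.toLp 1 (fun j => p j.castSucc)
  have hdist : ∀ p ∈ S, ∀ q ∈ S, dist p q ≤ 2 * dist (π p) (π q) := by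
    intro p hp q hq
    simp only [PiLp.dist_eq_of_L1, Real.dist_eq]
    apply sum_abs_le_two_mul_sum_abs_castSucc_of_sum_eq_zero
    simp [sum_sub_distrib, (hSΔ p hp).2, (hSΔ q hq).2]
  have hinj : Set.InjOn π S := fun p hp q hq hpq => by
    by_contra hne
    have hlt := isSeparated_iff_pairwise_lt_dist.1 hS hp hq hne
    have hle := hdist p hp q hq
    rw [hpq, dist_self] at hle
    linarith [ε.coe_nonneg]
  have hsep : IsSeparated ↑(ε / 2) (S.image π : Set (PiLp 1 (fun _ : Fin d => ℝ))) := by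
    rw [coe_image, isSeparated_iff_pairwise_lt_dist]
    rintro _ ⟨p, hp, rfl⟩ _ ⟨q, hq, rfl⟩ hne
    have hlt := isSeparated_iff_pairwise_lt_dist.1 hS hp hq (fun h => hne (h ▸ rfl))
    have hle := hdist p hp q hq
    push_cast
    linarith
  have hball : (S.image π : Set (PiLp 1 (fun _ : Fin d => ℝ))) ⊆ closedBall 0 1 := by
    rw [coe_image]
    rintro _ ⟨p, hp, rfl⟩
    rw [mem_closedBall_zero_iff, PiLp.norm_eq_of_L1]
    calc ∑ j : Fin d, ‖p j.castSucc‖ = ∑ j : Fin d, p j.castSucc :=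
          sum_congr rfl fun j _ => Real.norm_of_nonneg ((hSΔ p hp).1 _)
      _ ≤ ∑ j, p j := by
          rw [Fin.sum_univ_castSucc]; linarith [(hSΔ p hp).1 (Fin.last d)]
      _ = 1 := (hSΔ p hp).2
  calc (S.card : ℝ) = (S.image π).card := by rw [card_image_of_injOn hinj]
    _ ≤ (1 + 2 * 1 / ↑(ε / 2)) ^ finrank ℝ (PiLp 1 (fun _ : Fin d => ℝ)) :=
        hsep.card_le_of_subset_closedBall (half_pos hε) zero_le_one hball
    _ = (1 + 4 / ε) ^ d := by
        rw [(WithLp.linearEquiv 1 ℝ (Fin d → ℝ)).finrank_eq, finrank_fin_fun]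
        congr 2
        push_cast
        ring

theorem exists_finset_stdSimplex_l1_net {d : ℕ} {ε : ℝ} (hε : 0 < ε) :
    ∃ P : Finset (Fin (d + 1) → ℝ), ↑P ⊆ stdSimplex ℝ (Fin (d + 1)) ∧
      (P.card : ℝ) ≤ (1 + 4 / ε) ^ d ∧
      ∀ w ∈ stdSimplex ℝ (Fin (d + 1)), ∃ p ∈ P, ∑ j, |w j - p j| ≤ ε := by
  obtain ⟨C, hCΔ, hCcard, hCnet⟩ :=
    exists_finset_isCover_of_forall_card_le (A := WithLp.ofLp ⁻¹' stdSimplex ℝ (Fin (d + 1)))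
      fun S hSΔ hS => card_le_of_isSeparated_stdSimplex (Real.toNNReal_pos.2 hε) hSΔ hS
  rw [Real.coe_toNNReal _ hε.le] at hCcard
  refine ⟨C.image WithLp.ofLp, by simpa [Set.subset_def] using hCΔ,
    le_trans (mod_cast card_image_le) hCcard, fun w hw => ?_⟩
  obtain ⟨c, hc, hwc⟩ := Set.mem_iUnion₂.1 <|
    isCover_iff_subset_iUnion_closedBall.1 hCnet (show WithLp.toLp 1 w ∈ _ from hw)
  refine ⟨c.ofLp, mem_image_of_mem _ hc, ?_⟩
  rw [mem_closedBall, PiLp.dist_eq_of_L1, Real.coe_toNNReal _ hε.le] at hwc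
  simpa [Real.dist_eq] using hwc

theorem simplex_indexed_class_covering_number_general
    {α : Type*} (n : ℕ) (x : Fin n → α)
    (J : ℕ) (hJ : 1 ≤ J) (ρ₁ : ℝ) (hρ₁ : 0 < ρ₁)
    (h : (Fin J → ℝ) → α → ℝ)
    (hLip : ∀ w w' : Fin J → ℝ,
      ((∀ j, 0 ≤ w j) ∧ ∑ j, w j = 1) → ((∀ j, 0 ≤ w' j) ∧ ∑ j, w' j = 1) →
        Real.sqrt ((n : ℝ)⁻¹ * ∑ i, (h w (x i) - h w' (x i)) ^ 2)
          ≤ ρ₁ * ∑ j, |w j - w' j|)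
    (u : ℝ) (hu : u ∈ Set.Ioc (0 : ℝ) ρ₁) :
    ∃ T : Finset (α → ℝ),
      (T.card : ℝ) ≤ (1 + 4 * ρ₁ / u) ^ (J - 1)
      ∧ ∀ w : Fin J → ℝ, ((∀ j, 0 ≤ w j) ∧ ∑ j, w j = 1) →
          ∃ t ∈ T, Real.sqrt ((n : ℝ)⁻¹ * ∑ i, (h w (x i) - t (x i)) ^ 2) ≤ u := by
  classical
  obtain ⟨d, rfl⟩ : ∃ d, J = d + 1 := ⟨J - 1, by omega⟩
  obtain ⟨P, hPΔ, hPcard, hPnet⟩ :=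
    exists_finset_stdSimplex_l1_net (d := d) (div_pos hu.1 hρ₁)
  refine ⟨P.image h, ?_, fun w hw => ?_⟩
  · calc ((P.image h).card : ℝ) ≤ P.card := mod_cast card_image_le
      _ ≤ (1 + 4 / (u / ρ₁)) ^ d := hPcard
      _ = (1 + 4 * ρ₁ / u) ^ (d + 1 - 1) := by rw [div_div_eq_mul_div, Nat.add_sub_cancel]
  · obtain ⟨p, hp, hwp⟩ := hPnet w hw
    refine ⟨h p, mem_image_of_mem h hp, ?_⟩
    calc _ ≤ ρ₁ * ∑ j, |w j - p j| := hLip w p hw (hPΔ hp)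
      _ ≤ ρ₁ * (u / ρ₁) := by gcongr
      _ = u := mul_div_cancel₀ u hρ₁.ne'

/-- Covering-number bound for a function class indexed by the probability simplex: if
`w ↦ h(w)` is `ρ₁`-Lipschitz from `(Δ_J, ‖·‖₁)` into the empirical `L₂` norm, then for
every `0 < u ≤ ρ₁` the class `{h(w) : w ∈ Δ_J}` admits a `u`-net of cardinality at most
`(1 + 4ρ₁/u)^{J−1}`. -/
theorem simplex_indexed_class_covering_number
    {α : Type*} (n : ℕ) (hn : 1 ≤ n) (x : Fin n → α)
    (J : ℕ) (hJ : 1 ≤ J) (ρ₁ : ℝ) (hρ₁ : 0 < ρ₁)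
    (h : (Fin J → ℝ) → α → ℝ)
    (hLip : ∀ w w' : Fin J → ℝ,
      ((∀ j, 0 ≤ w j) ∧ ∑ j, w j = 1) → ((∀ j, 0 ≤ w' j) ∧ ∑ j, w' j = 1) →
        Real.sqrt ((n : ℝ)⁻¹ * ∑ i, (h w (x i) - h w' (x i)) ^ 2)
          ≤ ρ₁ * ∑ j, |w j - w' j|)
    (u : ℝ) (hu : u ∈ Set.Ioc (0 : ℝ) ρ₁) :
    ∃ T : Finset (α → ℝ),
      (T.card : ℝ) ≤ (1 + 4 * ρ₁ / u) ^ (J - 1)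
      ∧ ∀ w : Fin J → ℝ, ((∀ j, 0 ≤ w j) ∧ ∑ j, w j = 1) →
          ∃ t ∈ T, Real.sqrt ((n : ℝ)⁻¹ * ∑ i, (h w (x i) - t (x i)) ^ 2) ≤ u :=
  simplex_indexed_class_covering_number_general n x J hJ ρ₁ hρ₁ h hLip u hu
end

section
/- (Uniform law over the simplex, Lemma 2.) Let J ≥ 1 be an integer, ρ₁ > 0, let (E, ℰ) be a measurable space, and let h : E × Δ_J → ℝ be such that for each w ∈ Δ_J the map e ↦ h(e, w) is measurable, |h(e, w)| ≤ ρ₁ for all (e, w), and |h(e, w₁) − h(e, w₂)| ≤ ρ₁·‖w₁ − w₂‖₁ for all e ∈ E and w₁, w₂ ∈ Δ_J. Let ξ₁, ξ₂, … be i.i.d. E-valued random variables on a probability space with common law P. Then for every ε > 0 there exists C > 0 such that for all n ≥ 1, P( sup_{w ∈ Δ_J} | n⁻¹ Σ_{i=1}^n h(ξ_i, w) − E[h(ξ₁, w)] | ≥ C·n^{−1/2}·J^{1/2} ) ≤ ε; that is, the supremum over the simplex of the centered empirical average is O_p(n^{−1/2} J^{1/2}). -/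
/-!
Let `G n w = √n * (n⁻¹ ∑_{i<n} h (ξ i) w - ∫ h · w ∂P)`. By Hoeffding's lemma `G n w` is
sub-Gaussian with variance proxy `σ² = (ρ₁ J)²` and `G n u - G n v` with proxy
`(σ ‖u - v‖_∞)²`, uniformly in `n`. The simplex has `2^((k+1) J)`-point `2⁻ᵏ`-nets, so chaining
along these nets, with union bounds at thresholds proportional to `(3/4)ᵏ` at level `k`, shows
that `sup_w |G n w|` exceeds a constant depending only on `ρ₁`, `J`, `ε` with probability at
most `ε`. The chain reaches every `w` because `G n · ω` is continuous on the simplex.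
-/

open MeasureTheory ProbabilityTheory Finset Real Filter Topology
open scoped NNReal ENNReal

namespace ProbabilityTheory.HasSubgaussianMGF
variable {Ω : Type*} [MeasurableSpace Ω] {μ : Measure Ω} {X : Ω → ℝ} {c d : ℝ≥0}

lemma mono (h : HasSubgaussianMGF X c μ) (hcd : c ≤ d) : HasSubgaussianMGF X d μ where
  integrable_exp_mul := h.integrable_exp_mul
  mgf_le t := (h.mgf_le t).trans <| exp_le_exp.2 <| by gcongr

lemma measure_le_abs_le [IsFiniteMeasure μ] (h : HasSubgaussianMGF X c μ) {t : ℝ} (ht : 0 ≤ t) :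
    μ {ω | t ≤ |X ω|} ≤ ENNReal.ofReal (2 * exp (-t ^ 2 / (2 * c))) := by
  have hsub : {ω | t ≤ |X ω|} ⊆ {ω | t ≤ X ω} ∪ {ω | t ≤ (-X) ω} := fun ω hω => by
    rcases le_abs'.1 (show t ≤ |X ω| from hω) with h | h
    exacts [Or.inr (le_neg.1 h), Or.inl h]
  calc μ {ω | t ≤ |X ω|} ≤ μ {ω | t ≤ X ω} + μ {ω | t ≤ (-X) ω} :=
        (measure_mono hsub).trans (measure_union_le _ _)
    _ ≤ ENNReal.ofReal (exp (-t ^ 2 / (2 * c))) + ENNReal.ofReal (exp (-t ^ 2 / (2 * c))) := by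
        rw [← ofReal_measureReal, ← ofReal_measureReal]
        gcongr
        exacts [h.measure_ge_le ht, h.neg.measure_ge_le ht]
    _ = _ := by rw [← ENNReal.ofReal_add (by positivity) (by positivity), ← two_mul]

end ProbabilityTheory.HasSubgaussianMGF

namespace ProbabilityTheory
variable {Ω : Type*} [MeasurableSpace Ω] {μ : Measure Ω} [IsFiniteMeasure μ]

lemma measure_exists_le_abs_le_of_hasSubgaussianMGF {ι : Type*} (s : Finset ι)
    {X : ι → Ω → ℝ} {c : ℝ≥0} (hX : ∀ i ∈ s, HasSubgaussianMGF (X i) c μ) {t : ℝ} (ht : 0 ≤ t) :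
    μ {ω | ∃ i ∈ s, t ≤ |X i ω|} ≤ ENNReal.ofReal (#s * (2 * exp (-t ^ 2 / (2 * c)))) := by
  have hset : {ω | ∃ i ∈ s, t ≤ |X i ω|} = ⋃ i ∈ s, {ω | t ≤ |X i ω|} := by ext; simp
  calc μ {ω | ∃ i ∈ s, t ≤ |X i ω|} ≤ ∑ i ∈ s, μ {ω | t ≤ |X i ω|} :=
        hset ▸ measure_biUnion_finset_le s _
    _ ≤ ∑ _i ∈ s, ENNReal.ofReal (2 * exp (-t ^ 2 / (2 * c))) :=
        sum_le_sum fun i hi => (hX i hi).measure_le_abs_le ht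
    _ = _ := by
        rw [sum_const, nsmul_eq_mul, ENNReal.ofReal_mul (Nat.cast_nonneg _), ENNReal.ofReal_natCast]

lemma measure_exists_le_abs_le_of_card_le {ι : Type*} {s : Finset ι} {D : ℕ}
    (hcard : #s ≤ 2 ^ D) {X : ι → Ω → ℝ} {σ : ℝ≥0} (hX : ∀ i ∈ s, HasSubgaussianMGF (X i) (σ ^ 2) μ)
    (hσ : 0 < σ) {y : ℝ} (hy : 0 ≤ y) :
    μ {ω | ∃ i ∈ s, σ * √(2 * y) ≤ |X i ω|} ≤ ENNReal.ofReal (2 ^ (D + 1) * exp (-y)) := by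
  refine (measure_exists_le_abs_le_of_hasSubgaussianMGF s hX (by positivity)).trans
    (ENNReal.ofReal_le_ofReal ?_)
  have hexp : -(σ * √(2 * y)) ^ 2 / (2 * ((σ ^ 2 : ℝ≥0) : ℝ)) = -y := by
    rw [NNReal.coe_pow, mul_pow, Real.sq_sqrt (by positivity)]
    field_simp
  have hcard' : (#s : ℝ) ≤ 2 ^ D := by exact_mod_cast hcard
  rw [hexp, pow_succ, mul_assoc]
  gcongr

end ProbabilityTheory

lemma abs_le_of_tendsto_of_abs_sub_le {x : ℕ → ℝ} {a s T : ℝ} {t : ℕ → ℝ}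
    (hx : Tendsto x atTop (𝓝 a)) (h0 : |x 0| ≤ s) (hstep : ∀ k, |x (k + 1) - x k| ≤ t k)
    (hT : ∀ K, ∑ k ∈ range K, t k ≤ T) : |a| ≤ s + T := by
  refine le_of_tendsto' hx.abs fun K => ?_
  calc |x K| ≤ |x 0| + dist (x 0) (x K) := by
        rw [Real.dist_eq, abs_sub_comm]; linarith [abs_sub_abs_le_abs_sub (x K) (x 0)]
    _ ≤ s + ∑ k ∈ range K, t k := by
        gcongr
        exact (dist_le_range_sum_dist x K).trans <| sum_le_sum fun k _ => by
          rw [Real.dist_eq, abs_sub_comm]; exact hstep k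
    _ ≤ s + T := by linarith [hT K]

lemma ofReal_add_tsum_ofReal_pow_succ_le {q : ℝ} (hq0 : 0 ≤ q) (hq : q ≤ 1 / 4) :
    ENNReal.ofReal q + ∑' k, ENNReal.ofReal (q ^ (k + 1)) ≤ ENNReal.ofReal (3 * q) := by
  have hq1 : q < 1 := by linarith
  rw [← ENNReal.ofReal_tsum_of_nonneg (fun k => by positivity)
      ((summable_geometric_of_lt_one hq0 hq1).mul_left q |>.congr fun k => by ring),
    ← ENNReal.ofReal_add hq0 (by positivity)]
  refine ENNReal.ofReal_le_ofReal ?_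
  simp_rw [pow_succ', tsum_mul_left, tsum_geometric_of_lt_one hq0 hq1]
  have : q * (1 - q)⁻¹ ≤ 2 * q := by
    rw [← div_eq_mul_inv, div_le_iff₀ (by linarith)]; nlinarith
  linarith

section Chaining

variable {α : Type*} [PseudoMetricSpace α]

noncomputable def chainLinks (N : ℕ → Finset α) (k : ℕ) : Finset (α × α) :=
  (N k ×ˢ N (k + 1)).filter fun p => dist p.1 p.2 ≤ 2 * 2⁻¹ ^ k

/-- Outside the event on the right, every `w ∈ S` is reached from `N 0` by a chain of links
whose increments add up to at most `r * ∑ (3/4)ᵏ ≤ 4 * r`, and `G w` is the limit of the chain. -/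
lemma setOf_exists_lt_abs_subset {Ω : Type*} {S : Set α} {N : ℕ → Finset α}
    (hNS : ∀ k, ↑(N k) ⊆ S) (hN : ∀ k, ∀ w ∈ S, ∃ u ∈ N k, dist w u ≤ 2⁻¹ ^ k)
    {G : α → Ω → ℝ} (hG : ∀ ω, ContinuousOn (fun w => G w ω) S) {s r : ℝ} (hr : 0 ≤ r) :
    {ω | ∃ w ∈ S, s + 4 * r < |G w ω|} ⊆ {ω | ∃ u ∈ N 0, s ≤ |G u ω|} ∪
      ⋃ k, {ω | ∃ p ∈ chainLinks N k, r * (3 / 4) ^ k ≤ |G p.1 ω - G p.2 ω|} := by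
  choose! proj hprojN hprojdist using hN
  rintro ω ⟨w, hw, hlt⟩
  by_contra hω
  simp only [Set.mem_union, Set.mem_ofPred_eq, Set.mem_iUnion, not_or, not_exists, not_and,
    not_le] at hω
  obtain ⟨hω0, hωlinks⟩ := hω
  have hlim : Tendsto (fun K => proj K w) atTop (𝓝[S] w) := by
    refine tendsto_nhdsWithin_iff.2 ⟨?_, Eventually.of_forall fun K => hNS K (hprojN K w hw)⟩
    refine tendsto_iff_dist_tendsto_zero.2 <| squeeze_zero (fun _ => dist_nonneg)
      (fun K => (dist_comm _ _).trans_le (hprojdist K w hw)) ?_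
    exact tendsto_pow_atTop_nhds_zero_of_lt_one (by norm_num) (by norm_num)
  have hstep (k : ℕ) : |G (proj (k + 1) w) ω - G (proj k w) ω| ≤ r * (3 / 4) ^ k := by
    have hdist : dist (proj k w) (proj (k + 1) w) ≤ 2 * 2⁻¹ ^ k := by
      have := dist_triangle_left (proj k w) (proj (k + 1) w) w
      have := hprojdist k w hw
      have := hprojdist (k + 1) w hw
      rw [pow_succ] at *
      linarith [pow_nonneg (by norm_num : (0 : ℝ) ≤ 2⁻¹) k]
    rw [abs_sub_comm]
    exact (hωlinks k (proj k w, proj (k + 1) w) (mem_filter.2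
      ⟨mem_product.2 ⟨hprojN k w hw, hprojN (k + 1) w hw⟩, hdist⟩)).le
  have hsum (K : ℕ) : ∑ k ∈ range K, r * (3 / 4 : ℝ) ^ k ≤ 4 * r := by
    rw [← mul_sum, mul_comm, range_eq_Ico]
    refine mul_le_mul_of_nonneg_right ?_ hr
    exact (geom_sum_Ico_le_of_lt_one (by norm_num) (by norm_num)).trans_eq (by norm_num)
  exact hlt.not_ge <| abs_le_of_tendsto_of_abs_sub_le ((hG ω w hw).tendsto.comp hlim)
    (hω0 _ (hprojN 0 w hw)).le hstep hsum

-- The squared ratio of the level-`k` threshold to the level-`k` scale grows like `(9/4)ᵏ ≥ k + 1`.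
lemma exp_neg_sq_div_le_exp_neg_pow {σ y : ℝ} (hσ : 0 < σ) (hy : 0 ≤ y) (k : ℕ) :
    exp (-(σ * √(8 * y) * (3 / 4) ^ k) ^ 2 / (2 * (σ * (2 * 2⁻¹ ^ k)) ^ 2)) ≤
      exp (-y) ^ (k + 1) := by
  have hpow : (k + 1 : ℝ) ≤ (9 / 4) ^ k := by
    have := one_add_mul_le_pow (a := (5 / 4 : ℝ)) (by norm_num) k
    norm_num at this; linarith
  rw [← exp_nat_mul, exp_le_exp, neg_div, Nat.cast_succ, mul_neg, neg_le_neg_iff,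
    mul_pow, mul_pow, Real.sq_sqrt (by positivity)]
  calc _ ≤ y * (9 / 4) ^ k := by rw [mul_comm]; gcongr
    _ = _ := by
      field_simp
      rw [← pow_mul, ← pow_mul, mul_comm k 2, pow_mul, pow_mul,
        show ((3 / 4 : ℝ) ^ 2) ^ k = (9 / 4) ^ k * ((1 / 2) ^ 2) ^ k by rw [← mul_pow]; norm_num]
      ring

variable {Ω : Type*} [MeasurableSpace Ω] {μ : Measure Ω} [IsProbabilityMeasure μ]
  {S : Set α} {D : ℕ} {σ : ℝ≥0}

lemma measure_exists_le_abs_chainLinks_le {N : ℕ → Finset α} (hNS : ∀ k, ↑(N k) ⊆ S)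
    (hcard : ∀ k, #(N k) ≤ 2 ^ ((k + 1) * D)) {G : α → Ω → ℝ}
    (hG : ∀ u ∈ S, ∀ v ∈ S, HasSubgaussianMGF (fun ω => G u ω - G v ω) ((σ * nndist u v) ^ 2) μ)
    (hσ : 0 < σ) {y : ℝ} (hy : 0 ≤ y) (k : ℕ) :
    μ {ω | ∃ p ∈ chainLinks N k, σ * √(8 * y) * (3 / 4) ^ k ≤ |G p.1 ω - G p.2 ω|} ≤
      ENNReal.ofReal ((2 ^ (3 * D + 1) * exp (-y)) ^ (k + 1)) := by
  have hlinks : ∀ p ∈ chainLinks N k, HasSubgaussianMGF (fun ω => G p.1 ω - G p.2 ω)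
      ((σ * (2 * 2⁻¹ ^ k)) ^ 2) μ := by
    intro p hp
    obtain ⟨hprod, hpd⟩ := mem_filter.1 hp
    obtain ⟨h1, h2⟩ := mem_product.1 hprod
    refine (hG _ (hNS k h1) _ (hNS (k + 1) h2)).mono ?_
    gcongr
    rw [← NNReal.coe_le_coe]
    push_cast
    exact hpd
  refine (measure_exists_le_abs_le_of_hasSubgaussianMGF _ hlinks
    (by positivity)).trans (ENNReal.ofReal_le_ofReal ?_)
  have hcard' : (#(chainLinks N k) : ℝ) ≤ 2 ^ ((k + 1) * D) * 2 ^ ((k + 2) * D) := by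
    exact_mod_cast (card_filter_le _ _).trans
      ((card_product _ _).trans_le (Nat.mul_le_mul (hcard k) (hcard (k + 1))))
  have hexp : exp (-(σ * √(8 * y) * (3 / 4) ^ k) ^ 2 / (2 * ((σ * (2 * 2⁻¹ ^ k)) ^ 2 : ℝ≥0))) ≤
      exp (-y) ^ (k + 1) := by
    push_cast
    exact exp_neg_sq_div_le_exp_neg_pow (NNReal.coe_pos.2 hσ) hy k
  calc _ ≤ (2 : ℝ) ^ ((k + 1) * D) * 2 ^ ((k + 2) * D) * (2 * exp (-y) ^ (k + 1)) := by
        gcongr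
    _ ≤ (2 ^ (3 * D + 1) * exp (-y)) ^ (k + 1) := by
        rw [mul_pow, ← pow_mul, ← mul_assoc, ← pow_add, ← pow_succ]
        gcongr
        · norm_num
        · nlinarith

theorem exists_tail_bound_of_hasSubgaussianMGF_increments
    (hnet : ∀ k : ℕ, ∃ N : Finset α, ↑N ⊆ S ∧ #N ≤ 2 ^ ((k + 1) * D) ∧
      ∀ w ∈ S, ∃ u ∈ N, dist w u ≤ 2⁻¹ ^ k)
    (hσ : 0 < σ) {ε : ℝ} (hε : 0 < ε) :
    ∃ C : ℝ, 0 ≤ C ∧ ∀ G : α → Ω → ℝ,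
      (∀ u ∈ S, HasSubgaussianMGF (G u) (σ ^ 2) μ) →
      (∀ u ∈ S, ∀ v ∈ S, HasSubgaussianMGF (fun ω => G u ω - G v ω) ((σ * nndist u v) ^ 2) μ) →
      (∀ ω, ContinuousOn (fun w => G w ω) S) →
      μ {ω | ∃ w ∈ S, C < |G w ω|} ≤ ENNReal.ofReal ε := by
  choose N hNS hNcard hN using hnet
  set q := min ε 1 / 4 with hq_def
  have hq0 : 0 < q := by positivity
  have hq1 : q ≤ 1 / 4 := by rw [hq_def]; linarith [min_le_right ε 1]
  set y := log (2 ^ (3 * D + 1) / q)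
  have hy : 0 ≤ y := log_nonneg <| by
    rw [le_div_iff₀ hq0]; linarith [one_le_pow₀ (M₀ := ℝ) (n := 3 * D + 1) one_le_two]
  have hqy : 2 ^ (3 * D + 1) * exp (-y) = q := by
    rw [exp_neg, exp_log (by positivity), inv_div, mul_div_cancel₀ _ (by positivity)]
  refine ⟨σ * √(2 * y) + 4 * (σ * √(8 * y)), by positivity, fun G hbase hincr hcont => ?_⟩
  calc _ ≤ _ := measure_mono (setOf_exists_lt_abs_subset hNS hN hcont (by positivity))
    _ ≤ ENNReal.ofReal q + ∑' k, ENNReal.ofReal (q ^ (k + 1)) := by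
        refine (measure_union_le _ _).trans (add_le_add ?_ ?_)
        · refine (measure_exists_le_abs_le_of_card_le (D := D) ((hNcard 0).trans_eq (by simp))
            (fun u hu => hbase u (hNS 0 hu)) hσ hy).trans (ENNReal.ofReal_le_ofReal ?_)
          rw [← hqy]
          gcongr
          · norm_num
          · omega
        · refine (measure_iUnion_le _).trans (ENNReal.tsum_le_tsum fun k => ?_)
          exact hqy ▸ measure_exists_le_abs_chainLinks_le hNS hNcard hincr hσ hy k
    _ ≤ ENNReal.ofReal (3 * q) := ofReal_add_tsum_ofReal_pow_succ_le hq0.le hq1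
    _ ≤ ENNReal.ofReal ε := ENNReal.ofReal_le_ofReal (by rw [hq_def]; linarith [min_le_left ε 1])

end Chaining

section EmpiricalDeviation

variable {E Ω : Type*} [MeasurableSpace E] {P : Measure E} {ξ : ℕ → Ω → E} {n : ℕ}

noncomputable def empiricalDeviation (P : Measure E) (ξ : ℕ → Ω → E) (n : ℕ) (g : E → ℝ)
    (ω : Ω) : ℝ :=
  (n : ℝ)⁻¹ * ∑ i ∈ range n, g (ξ i ω) - ∫ e, g e ∂P

lemma empiricalDeviation_sub {f g : E → ℝ} (hf : Integrable f P) (hg : Integrable g P)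
    (ω : Ω) :
    empiricalDeviation P ξ n (fun e => f e - g e) ω =
      empiricalDeviation P ξ n f ω - empiricalDeviation P ξ n g ω := by
  simp only [empiricalDeviation, sum_sub_distrib, integral_sub hf hg]
  ring

lemma abs_empiricalDeviation_le [IsProbabilityMeasure P] {g : E → ℝ} {b : ℝ≥0}
    (hg : ∀ e, |g e| ≤ b) (ω : Ω) : |empiricalDeviation P ξ n g ω| ≤ 2 * b := by
  have havg : |(n : ℝ)⁻¹ * ∑ i ∈ range n, g (ξ i ω)| ≤ b := by
    rcases n.eq_zero_or_pos with rfl | hn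
    · simp
    rw [abs_mul, abs_inv, Nat.abs_cast, inv_mul_le_iff₀ (by positivity)]
    simpa using (abs_sum_le_sum_abs _ _).trans
      (sum_le_card_nsmul (range n) _ _ fun i _ => hg (ξ i ω))
  have hint : |∫ e, g e ∂P| ≤ b := by
    simpa using norm_integral_le_of_norm_le_const (μ := P)
      (ae_of_all _ fun e => (norm_eq_abs _).trans_le (hg e))
  calc _ ≤ |(n : ℝ)⁻¹ * ∑ i ∈ range n, g (ξ i ω)| + |∫ e, g e ∂P| := abs_sub _ _
    _ ≤ 2 * b := by linarith

lemma hasSubgaussianMGF_sqrt_mul_empiricalDeviation [MeasurableSpace Ω] {μ : Measure Ω}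
    [IsProbabilityMeasure μ] (hξ : ∀ i, Measurable (ξ i)) (hindep : iIndepFun ξ μ)
    (hlaw : ∀ i, μ.map (ξ i) = P) {g : E → ℝ} (hg : Measurable g) {b : ℝ≥0}
    (hgb : ∀ e, |g e| ≤ b) (hn : n ≠ 0) :
    HasSubgaussianMGF (fun ω => √n * empiricalDeviation P ξ n g ω) (b ^ 2) μ := by
  have hterm : ∀ i < n, HasSubgaussianMGF (fun ω => g (ξ i ω) - ∫ e, g e ∂P) (b ^ 2) μ := by
    intro i _
    have := hasSubgaussianMGF_of_mem_Icc (μ := μ) (X := fun ω => g (ξ i ω)) (a := -b) (b := b)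
      (hg.comp (hξ i)).aemeasurable (ae_of_all _ fun ω => abs_le.1 (hgb _))
    rw [← integral_map (hξ i).aemeasurable hg.aestronglyMeasurable, hlaw i] at this
    convert this using 1
    ext; simp [← two_mul]
  have hsum := HasSubgaussianMGF.sum_of_iIndepFun
    (hindep.comp (fun _ e => g e - ∫ e, g e ∂P) fun _ => hg.sub_const _)
    (s := range n) fun i hi => hterm i (mem_range.1 hi)
  have hn' : (0 : ℝ) < n := by positivity
  have hscaled := (hsum.const_mul (√n)⁻¹).mono (d := b ^ 2) <| le_of_eq <| NNReal.eq <|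
    show (√n)⁻¹ ^ 2 * ((∑ _i ∈ range n, b ^ 2 : ℝ≥0) : ℝ) = ((b ^ 2 : ℝ≥0) : ℝ) by
      simp [Real.sq_sqrt hn'.le]
      field_simp
  convert hscaled using 1
  ext ω
  simp only [empiricalDeviation, Function.comp, sum_sub_distrib, sum_const, card_range,
    nsmul_eq_mul]
  set s := √(n : ℝ)
  have hs0 : 0 < s := by positivity
  rw [show (n : ℝ) = s ^ 2 from (Real.sq_sqrt (Nat.cast_nonneg n)).symm]
  field_simp

variable {α : Type*} {S : Set α} {h : E → α → ℝ} {K : ℝ≥0}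

lemma sqrt_mul_empiricalDeviation_sub [IsProbabilityMeasure P]
    (hmeas : ∀ w ∈ S, Measurable (h · w)) (hbdd : ∀ e, ∀ w ∈ S, |h e w| ≤ K)
    {u v : α} (hu : u ∈ S) (hv : v ∈ S) (ω : Ω) :
    √n * empiricalDeviation P ξ n (h · u) ω - √n * empiricalDeviation P ξ n (h · v) ω =
      √n * empiricalDeviation P ξ n (fun e => h e u - h e v) ω := by
  have hint : ∀ w ∈ S, Integrable (h · w) P := fun w hw =>
    .of_bound (hmeas w hw).aestronglyMeasurable K (ae_of_all _ fun e => hbdd e w hw)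
  rw [empiricalDeviation_sub (hint u hu) (hint v hv), mul_sub]

lemma continuousOn_sqrt_mul_empiricalDeviation [PseudoMetricSpace α] [IsProbabilityMeasure P]
    (hmeas : ∀ w ∈ S, Measurable (h · w)) (hbdd : ∀ e, ∀ w ∈ S, |h e w| ≤ K)
    (hLip : ∀ e, ∀ u ∈ S, ∀ v ∈ S, |h e u - h e v| ≤ K * dist u v) (ω : Ω) :
    ContinuousOn (fun w => √n * empiricalDeviation P ξ n (h · w) ω) S := by
  refine (LipschitzOnWith.of_dist_le_mul (K := NNReal.sqrt n * (2 * K))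
    fun u hu v hv => ?_).continuousOn
  rw [Real.dist_eq, sqrt_mul_empiricalDeviation_sub hmeas hbdd hu hv, abs_mul,
    abs_of_nonneg (Real.sqrt_nonneg _)]
  push_cast
  rw [mul_assoc, mul_assoc]
  gcongr
  exact_mod_cast abs_empiricalDeviation_le (b := K * nndist u v) (fun e => hLip e u hu v hv) ω

lemma hasSubgaussianMGF_sqrt_mul_empiricalDeviation_sub [PseudoMetricSpace α]
    [MeasurableSpace Ω] {μ : Measure Ω} [IsProbabilityMeasure μ] [IsProbabilityMeasure P]
    (hξ : ∀ i, Measurable (ξ i)) (hindep : iIndepFun ξ μ) (hlaw : ∀ i, μ.map (ξ i) = P)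
    (hmeas : ∀ w ∈ S, Measurable (h · w)) (hbdd : ∀ e, ∀ w ∈ S, |h e w| ≤ K)
    (hLip : ∀ e, ∀ u ∈ S, ∀ v ∈ S, |h e u - h e v| ≤ K * dist u v) (hn : n ≠ 0)
    {u v : α} (hu : u ∈ S) (hv : v ∈ S) :
    HasSubgaussianMGF (fun ω => √n * empiricalDeviation P ξ n (h · u) ω -
      √n * empiricalDeviation P ξ n (h · v) ω) ((K * nndist u v) ^ 2) μ := by
  simp_rw [sqrt_mul_empiricalDeviation_sub hmeas hbdd hu hv]
  exact hasSubgaussianMGF_sqrt_mul_empiricalDeviation hξ hindep hlaw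
    ((hmeas u hu).sub (hmeas v hv)) (fun e => hLip e u hu v hv) hn

end EmpiricalDeviation

section Net

variable {ι : Type*} [Fintype ι] {S : Set (ι → ℝ)}

theorem exists_finset_subset_card_le_dist_le
    (hS : S ⊆ Set.Icc 0 1) {m : ℕ} (hm : 0 < m) :
    ∃ N : Finset (ι → ℝ), ↑N ⊆ S ∧ #N ≤ (m + 1) ^ Fintype.card ι ∧
      ∀ w ∈ S, ∃ u ∈ N, dist w u ≤ (m : ℝ)⁻¹ := by
  classical
  let cell (a : ι → ℤ) : Set (ι → ℝ) := {w ∈ S | ∀ i, ⌊m * w i⌋ = a i}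
  let rep (a : ι → ℤ) : ι → ℝ := if h : (cell a).Nonempty then h.some else 0
  have hrep {a : ι → ℤ} (ha : (cell a).Nonempty) : rep a ∈ cell a := by
    simpa only [rep, dif_pos ha] using ha.some_mem
  let A := Fintype.piFinset fun _ : ι => Finset.Icc (0 : ℤ) m
  refine ⟨(A.filter fun a => (cell a).Nonempty).image rep, ?_, ?_, ?_⟩
  · intro u hu
    obtain ⟨a, ha, rfl⟩ := Finset.mem_image.1 hu
    exact (hrep (Finset.mem_filter.1 ha).2).1
  · calc _ ≤ #A := card_image_le.trans (card_filter_le _ _)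
      _ = (m + 1) ^ Fintype.card ι := by simp [A]
  · intro w hw
    have hm' : (0 : ℝ) < m := by exact_mod_cast hm
    have hcell : (cell fun i => ⌊m * w i⌋).Nonempty := ⟨w, hw, fun _ => rfl⟩
    have hA : (fun i => ⌊m * w i⌋) ∈ A := by
      simp only [A, Fintype.mem_piFinset, Finset.mem_Icc]
      intro i
      obtain ⟨h0, h1⟩ := hS hw
      constructor
      · exact Int.floor_nonneg.2 (mul_nonneg hm'.le (h0 i))
      · simpa using Int.floor_mono (mul_le_of_le_one_right hm'.le (h1 i))
    refine ⟨_, Finset.mem_image_of_mem rep (Finset.mem_filter.2 ⟨hA, hcell⟩), ?_⟩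
    obtain ⟨-, hu⟩ := hrep hcell
    refine (dist_pi_le_iff (by positivity)).2 fun i => ?_
    have := Int.abs_sub_lt_one_of_floor_eq_floor (hu i).symm
    rw [← mul_sub, abs_mul, abs_of_pos hm'] at this
    rw [Real.dist_eq, ← one_div, le_div_iff₀' hm']
    exact this.le

lemma exists_dyadic_net_of_subset_Icc (hS : S ⊆ Set.Icc 0 1) (k : ℕ) :
    ∃ N : Finset (ι → ℝ), ↑N ⊆ S ∧ #N ≤ 2 ^ ((k + 1) * Fintype.card ι) ∧
      ∀ w ∈ S, ∃ u ∈ N, dist w u ≤ 2⁻¹ ^ k := by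
  obtain ⟨N, hNS, hcard, hN⟩ := exists_finset_subset_card_le_dist_le hS (m := 2 ^ k) (by positivity)
  refine ⟨N, hNS, hcard.trans ?_, by simpa [inv_pow] using hN⟩
  rw [pow_mul]
  exact Nat.pow_le_pow_left (by rw [pow_succ]; linarith [Nat.one_le_two_pow (n := k)]) _

lemma sum_abs_sub_le_card_mul_dist (u v : ι → ℝ) :
    ∑ i, |u i - v i| ≤ Fintype.card ι * dist u v := by
  simpa using sum_le_card_nsmul univ _ _ fun i _ =>
    (Real.dist_eq _ _).symm.trans_le (dist_le_pi_dist u v i)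

end Net

lemma setOf_le_biSup_abs_subset {ι Ω : Type*} {S : Set ι} {f : ι → Ω → ℝ} {A B c : ℝ}
    (hB : 0 ≤ B) (hc : 0 < c) (hA : B / c < A) :
    {ω | A ≤ ⨆ i ∈ S, |f i ω|} ⊆ {ω | ∃ i ∈ S, B < |c * f i ω|} := by
  intro ω hω
  by_contra hlt
  simp only [Set.mem_ofPred_eq, not_exists, not_and, not_lt] at hω hlt
  have hsup : ⨆ i ∈ S, |f i ω| ≤ B / c :=
    Real.iSup_le (fun i => Real.iSup_le (fun hi => by
      rw [le_div_iff₀ hc, mul_comm, ← abs_of_pos hc, ← abs_mul]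
      exact hlt i hi) (by positivity)) (by positivity)
  linarith

/-- Uniform law over the simplex (Lemma 2): if `h : E × Δ_J → ℝ` is measurable in its
first argument, uniformly bounded by `ρ₁`, and `ρ₁`-Lipschitz in `w ∈ Δ_J` for the `ℓ¹`
distance, and `ξ₁, ξ₂, …` are i.i.d. with common law `P`, then for every `ε > 0` there is
`C > 0` such that for all `n ≥ 1`,
`P(sup_{w ∈ Δ_J} |n⁻¹ Σ_{i<n} h(ξ_i, w) − E[h(ξ₁, w)]| ≥ C n^{−1/2} J^{1/2}) ≤ ε`. -/
theorem uniform_law_over_simplex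
    {E : Type*} [MeasurableSpace E] (J : ℕ) (hJ : 1 ≤ J) (ρ₁ : ℝ) (hρ₁ : 0 < ρ₁)
    (h : E → (Fin J → ℝ) → ℝ)
    (hmeas : ∀ w : Fin J → ℝ, ((∀ j, 0 ≤ w j) ∧ ∑ j, w j = 1) →
      Measurable (fun e => h e w))
    (hbdd : ∀ (e : E) (w : Fin J → ℝ), ((∀ j, 0 ≤ w j) ∧ ∑ j, w j = 1) → |h e w| ≤ ρ₁)
    (hLip : ∀ (e : E) (w₁ w₂ : Fin J → ℝ),
      ((∀ j, 0 ≤ w₁ j) ∧ ∑ j, w₁ j = 1) → ((∀ j, 0 ≤ w₂ j) ∧ ∑ j, w₂ j = 1) →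
      |h e w₁ - h e w₂| ≤ ρ₁ * ∑ j, |w₁ j - w₂ j|)
    {Ω : Type*} [MeasurableSpace Ω] (μ : Measure Ω) [IsProbabilityMeasure μ]
    (P : Measure E) [IsProbabilityMeasure P]
    (ξ : ℕ → Ω → E) (hξmeas : ∀ i, Measurable (ξ i))
    (hindep : iIndepFun ξ μ)
    (hlaw : ∀ i, μ.map (ξ i) = P) :
    ∀ ε : ℝ, 0 < ε → ∃ C : ℝ, 0 < C ∧ ∀ n : ℕ, 1 ≤ n →
      μ {ω | C / Real.sqrt n * Real.sqrt J ≤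
          ⨆ w ∈ {w : Fin J → ℝ | (∀ j, 0 ≤ w j) ∧ ∑ j, w j = 1},
            |(n : ℝ)⁻¹ * ∑ i ∈ Finset.range n, h (ξ i ω) w - ∫ e, h e w ∂P|}
        ≤ ENNReal.ofReal ε := by
  intro ε hε
  have hJ' : (1 : ℝ) ≤ J := by exact_mod_cast hJ
  -- `Fin J → ℝ` carries the sup distance, which bounds the `ℓ¹` distance only up to the factor `J`
  set K : ℝ≥0 := (ρ₁ * J).toNNReal
  have hK : (K : ℝ) = ρ₁ * J := Real.coe_toNNReal _ (by positivity)
  have hK0 : 0 < K := by rw [← NNReal.coe_pos, hK]; positivity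
  have hbddK : ∀ e, ∀ w ∈ stdSimplex ℝ (Fin J), |h e w| ≤ K := fun e w hw =>
    hK ▸ (hbdd e w hw).trans (le_mul_of_one_le_right hρ₁.le hJ')
  have hLipK : ∀ e, ∀ u ∈ stdSimplex ℝ (Fin J), ∀ v ∈ stdSimplex ℝ (Fin J),
      |h e u - h e v| ≤ K * dist u v := fun e u hu v hv => by
    refine (hLip e u v hu hv).trans ?_
    rw [hK, mul_assoc]
    simpa using mul_le_mul_of_nonneg_left (sum_abs_sub_le_card_mul_dist u v) hρ₁.le
  obtain ⟨C, hC0, hC⟩ := exists_tail_bound_of_hasSubgaussianMGF_increments (μ := μ)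
    (exists_dyadic_net_of_subset_Icc (stdSimplex_subset_Icc ℝ (ι := Fin J))) hK0 hε
  refine ⟨C + 1, by positivity, fun n hn => ?_⟩
  have hn0 : n ≠ 0 := by omega
  have hsqrt : 0 < √(n : ℝ) := by positivity
  refine (measure_mono (setOf_le_biSup_abs_subset hC0 hsqrt ?_)).trans
    (hC (fun w ω => √n * empiricalDeviation P ξ n (h · w) ω)
      (fun u hu => hasSubgaussianMGF_sqrt_mul_empiricalDeviation hξmeas hindep hlaw
        (hmeas u hu) (fun e => hbddK e u hu) hn0)
      (fun u hu v hv => hasSubgaussianMGF_sqrt_mul_empiricalDeviation_sub hξmeas hindep hlaw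
        hmeas hbddK hLipK hn0 hu hv)
      (fun ω => continuousOn_sqrt_mul_empiricalDeviation hmeas hbddK hLipK ω))
  calc C / √n < (C + 1) / √n := by gcongr; linarith
    _ ≤ (C + 1) / √n * √J := le_mul_of_one_le_right (by positivity) (by simpa using hJ')
end
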